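/- Let F be a field of characteristic zero, Γ ⊆ F^{2ℓ} an additive subgroup containing each σ_p = ε_p + ε_{p+ℓ}, and M = F[Γ] the Lie algebra with bracket [x^α, x^β] = Σ_{p=1}^{ℓ} (α_p β_{p+ℓ} − α_{p+ℓ} β_p) x^{σ_p+α+β}. Set σ = Σ_{p=1}^{ℓ} σ_p and let μ : Γ → F be a group homomorphism with μ(σ_p) = 0 for all p. Define φ_μ(x^α, x^β) = μ(α) δ_{α+β, σ} (extended bilinearly). Then φ_μ is a 2-cocycle on M. -/

import Mathlib

open scoped Classical

def idx1 {ℓ : ℕ} (p : Fin ℓ) : Fin (2 * ℓ) := ⟨p.1, by have := p.isLt; omega⟩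

def idx2 {ℓ : ℕ} (p : Fin ℓ) : Fin (2 * ℓ) := ⟨p.1 + ℓ, by have := p.isLt; omega⟩

/-- The standard coordinate vector `ε_q` in `F^{2ℓ}`. -/
def eps {ℓ : ℕ} (F : Type*) [Field F] (q : Fin (2 * ℓ)) : Fin (2 * ℓ) → F :=
  fun r => if r = q then 1 else 0

/-- `σ_p = ε_p + ε_{p+ℓ}`. -/
def sigmaVec {ℓ : ℕ} (F : Type*) [Field F] (p : Fin ℓ) : Fin (2 * ℓ) → F :=
  eps F (idx1 p) + eps F (idx2 p)

/-- The Hamiltonian bracket on the group algebra `F[Γ]` (with basis `x^α`, `α ∈ Γ`,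
realized as `Γ →₀ F`):
`[x^α, x^β] = ∑_p (α_p β_{p+ℓ} − α_{p+ℓ} β_p) x^{σ_p + α + β}`, extended bilinearly. -/
noncomputable def hamBr {ℓ : ℕ} {F : Type*} [Field F]
    (Γ : AddSubgroup (Fin (2 * ℓ) → F)) (hσ : ∀ p : Fin ℓ, sigmaVec F p ∈ Γ)
    (f g : Γ →₀ F) : Γ →₀ F :=
  Finsupp.sum f fun α a => Finsupp.sum g fun β b => ∑ p : Fin ℓ,
    Finsupp.single ((⟨sigmaVec F p, hσ p⟩ : Γ) + α + β)
      (a * b * ((α : Fin (2 * ℓ) → F) (idx1 p) * (β : Fin (2 * ℓ) → F) (idx2 p)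
        - (α : Fin (2 * ℓ) → F) (idx2 p) * (β : Fin (2 * ℓ) → F) (idx1 p)))

/-- `σ = ∑_p σ_p` as an element of `Γ`. -/
noncomputable def sigmaTot {ℓ : ℕ} {F : Type*} [Field F]
    (Γ : AddSubgroup (Fin (2 * ℓ) → F)) (hσ : ∀ p : Fin ℓ, sigmaVec F p ∈ Γ) : Γ :=
  ∑ p : Fin ℓ, (⟨sigmaVec F p, hσ p⟩ : Γ)

/-- `φ_μ(x^α, x^β) = μ(α) δ_{α+β,σ}`, extended bilinearly. -/
noncomputable def phiMu {ℓ : ℕ} {F : Type*} [Field F]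
    (Γ : AddSubgroup (Fin (2 * ℓ) → F)) (hσ : ∀ p : Fin ℓ, sigmaVec F p ∈ Γ)
    (μ : Γ →+ F) (f g : Γ →₀ F) : F :=
  Finsupp.sum f fun α a => Finsupp.sum g fun β b =>
    a * b * μ α * (if α + β = sigmaTot Γ hσ then 1 else 0)

section Aux
variable {ℓ : ℕ} {F : Type*} [Field F]
variable (Γ : AddSubgroup (Fin (2 * ℓ) → F)) (hσ : ∀ p : Fin ℓ, sigmaVec F p ∈ Γ) (μ : Γ →+ F)

lemma idx1_inj {p q : Fin ℓ} : idx1 q = idx1 p ↔ q = p := by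
  simp [idx1, Fin.ext_iff]
lemma idx2_inj {p q : Fin ℓ} : idx2 q = idx2 p ↔ q = p := by
  simp [idx2, Fin.ext_iff]
lemma idx1_ne_idx2 (p q : Fin ℓ) : idx1 q ≠ idx2 p := by
  have := q.isLt; simp [idx1, idx2, Fin.ext_iff]; omega
lemma idx2_ne_idx1 (p q : Fin ℓ) : idx2 q ≠ idx1 p := by
  have := p.isLt; simp [idx1, idx2, Fin.ext_iff]; omega

lemma sigmaVec_idx1 (p q : Fin ℓ) : sigmaVec F p (idx1 q) = if q = p then (1:F) else 0 := by
  simp [sigmaVec, eps, idx1_inj, idx1_ne_idx2]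
lemma sigmaVec_idx2 (p q : Fin ℓ) : sigmaVec F p (idx2 q) = if q = p then (1:F) else 0 := by
  simp [sigmaVec, eps, idx2_inj, idx2_ne_idx1]

lemma sigmaTot_idx1 (p : Fin ℓ) : ((sigmaTot Γ hσ : Γ) : Fin (2*ℓ) → F) (idx1 p) = 1 := by
  rw [sigmaTot]
  rw [AddSubgroup.val_finset_sum]
  simp [Finset.sum_apply, sigmaVec_idx1]
lemma sigmaTot_idx2 (p : Fin ℓ) : ((sigmaTot Γ hσ : Γ) : Fin (2*ℓ) → F) (idx2 p) = 1 := by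
  rw [sigmaTot]
  rw [AddSubgroup.val_finset_sum]
  simp [Finset.sum_apply, sigmaVec_idx2]

lemma mu_sigmaTot (hμ : ∀ p : Fin ℓ, μ ⟨sigmaVec F p, hσ p⟩ = 0) : μ (sigmaTot Γ hσ) = 0 := by
  rw [sigmaTot, map_sum]; simp [hμ]
lemma phiMu_zero_left (g : Γ →₀ F) : phiMu Γ hσ μ 0 g = 0 := by simp [phiMu]
lemma phiMu_zero_right (f : Γ →₀ F) : phiMu Γ hσ μ f 0 = 0 := by simp [phiMu]

lemma phiMu_add_left (f₁ f₂ g : Γ →₀ F) :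
    phiMu Γ hσ μ (f₁ + f₂) g = phiMu Γ hσ μ f₁ g + phiMu Γ hσ μ f₂ g := by
  unfold phiMu
  apply Finsupp.sum_add_index'
  · intro α; simp
  · intro α a₁ a₂
    rw [← Finsupp.sum_add]
    apply Finsupp.sum_congr
    intro β _
    ring

lemma phiMu_add_right (f g₁ g₂ : Γ →₀ F) :
    phiMu Γ hσ μ f (g₁ + g₂) = phiMu Γ hσ μ f g₁ + phiMu Γ hσ μ f g₂ := by
  unfold phiMu
  rw [← Finsupp.sum_add]
  apply Finsupp.sum_congr
  intro α _
  apply Finsupp.sum_add_index'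
  · intro β; simp
  · intro β b₁ b₂; ring

lemma phiMu_single_left (α : Γ) (a : F) (g : Γ →₀ F) :
    phiMu Γ hσ μ (Finsupp.single α a) g
      = Finsupp.sum g fun β b => a * b * μ α * (if α + β = sigmaTot Γ hσ then 1 else 0) := by
  unfold phiMu
  apply Finsupp.sum_single_index
  simp

lemma phiMu_single_single (α β : Γ) (a b : F) :
    phiMu Γ hσ μ (Finsupp.single α a) (Finsupp.single β b)
      = a * b * μ α * (if α + β = sigmaTot Γ hσ then 1 else 0) := by
  rw [phiMu_single_left]
  apply Finsupp.sum_single_index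
  simp

lemma phiMu_sum_left {ι : Type*} (s : Finset ι) (f : ι → (Γ →₀ F)) (g : Γ →₀ F) :
    phiMu Γ hσ μ (∑ i ∈ s, f i) g = ∑ i ∈ s, phiMu Γ hσ μ (f i) g := by
  induction s using Finset.induction with
  | empty => simp [phiMu_zero_left]
  | insert a s h ih =>
    rw [Finset.sum_insert h, Finset.sum_insert h, phiMu_add_left, ih]

lemma hamBr_zero_left (g : Γ →₀ F) : hamBr Γ hσ 0 g = 0 := by simp [hamBr]
lemma hamBr_zero_right (f : Γ →₀ F) : hamBr Γ hσ f 0 = 0 := by simp [hamBr]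

lemma hamBr_add_left (f₁ f₂ g : Γ →₀ F) :
    hamBr Γ hσ (f₁ + f₂) g = hamBr Γ hσ f₁ g + hamBr Γ hσ f₂ g := by
  unfold hamBr
  apply Finsupp.sum_add_index'
  · intro α; simp
  · intro α a₁ a₂
    rw [← Finsupp.sum_add]
    apply Finsupp.sum_congr
    intro β _
    rw [← Finset.sum_add_distrib]
    apply Finset.sum_congr rfl
    intro p _
    rw [← Finsupp.single_add]
    congr 1
    ring

lemma hamBr_add_right (f g₁ g₂ : Γ →₀ F) :
    hamBr Γ hσ f (g₁ + g₂) = hamBr Γ hσ f g₁ + hamBr Γ hσ f g₂ := by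
  unfold hamBr
  rw [← Finsupp.sum_add]
  apply Finsupp.sum_congr
  intro α _
  apply Finsupp.sum_add_index'
  · intro β; simp
  · intro β b₁ b₂
    rw [← Finset.sum_add_distrib]
    apply Finset.sum_congr rfl
    intro p _
    rw [← Finsupp.single_add]
    congr 1
    ring

lemma hamBr_single_single (α β : Γ) (a b : F) :
    hamBr Γ hσ (Finsupp.single α a) (Finsupp.single β b) = ∑ p : Fin ℓ,
      Finsupp.single ((⟨sigmaVec F p, hσ p⟩ : Γ) + α + β)
        (a * b * ((α : Fin (2 * ℓ) → F) (idx1 p) * (β : Fin (2 * ℓ) → F) (idx2 p)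
          - (α : Fin (2 * ℓ) → F) (idx2 p) * (β : Fin (2 * ℓ) → F) (idx1 p))) := by
  unfold hamBr
  rw [Finsupp.sum_single_index (by simp)]
  apply Finsupp.sum_single_index
  simp
lemma phiMu_skew (hμ : ∀ p : Fin ℓ, μ ⟨sigmaVec F p, hσ p⟩ = 0) (f g : Γ →₀ F) :
    phiMu Γ hσ μ f g = - phiMu Γ hσ μ g f := by
  rw [eq_neg_iff_add_eq_zero]
  unfold phiMu
  simp only [Finsupp.sum]
  rw [Finset.sum_comm (s := g.support)]
  rw [← Finset.sum_add_distrib]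
  apply Finset.sum_eq_zero
  intro α hα
  rw [← Finset.sum_add_distrib]
  apply Finset.sum_eq_zero
  intro β hβ
  rw [add_comm β α]
  by_cases h : α + β = sigmaTot Γ hσ
  · rw [if_pos h]
    have hm : μ α + μ β = 0 := by
      rw [← map_add, h, mu_sigmaTot Γ hσ μ hμ]
    linear_combination (f α * g β) * hm
  · rw [if_neg h]; ring

lemma key_cocycle (hμ : ∀ p : Fin ℓ, μ ⟨sigmaVec F p, hσ p⟩ = 0)
    (α β γ : Γ) (a b c : F) :
    phiMu Γ hσ μ (hamBr Γ hσ (Finsupp.single α a) (Finsupp.single β b)) (Finsupp.single γ c)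
    + phiMu Γ hσ μ (hamBr Γ hσ (Finsupp.single β b) (Finsupp.single γ c)) (Finsupp.single α a)
    + phiMu Γ hσ μ (hamBr Γ hσ (Finsupp.single γ c) (Finsupp.single α a)) (Finsupp.single β b)
    = 0 := by
  rw [hamBr_single_single, hamBr_single_single, hamBr_single_single,
    phiMu_sum_left, phiMu_sum_left, phiMu_sum_left]
  simp only [phiMu_single_single]
  rw [← Finset.sum_add_distrib, ← Finset.sum_add_distrib]
  apply Finset.sum_eq_zero
  intro p _
  have e₂ : (⟨sigmaVec F p, hσ p⟩ : Γ) + β + γ + α = (⟨sigmaVec F p, hσ p⟩ : Γ) + α + β + γ := by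
    abel
  have e₃ : (⟨sigmaVec F p, hσ p⟩ : Γ) + γ + α + β = (⟨sigmaVec F p, hσ p⟩ : Γ) + α + β + γ := by
    abel
  rw [e₂, e₃]
  by_cases hδ : (⟨sigmaVec F p, hσ p⟩ : Γ) + α + β + γ = sigmaTot Γ hσ
  · rw [if_pos hδ]
    have h1 : (1:F) + ((α : Fin (2*ℓ) → F) (idx1 p) + (β : Fin (2*ℓ) → F) (idx1 p)
        + (γ : Fin (2*ℓ) → F) (idx1 p)) = 1 := by
      have := congrArg (fun x : Γ => (x : Fin (2*ℓ) → F) (idx1 p)) hδ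
      simp only [AddSubgroup.coe_add, Pi.add_apply, sigmaTot_idx1] at this
      have hs : sigmaVec F p (idx1 p) = 1 := by rw [sigmaVec_idx1]; simp
      rw [hs] at this
      linear_combination this
    have h2 : (1:F) + ((α : Fin (2*ℓ) → F) (idx2 p) + (β : Fin (2*ℓ) → F) (idx2 p)
        + (γ : Fin (2*ℓ) → F) (idx2 p)) = 1 := by
      have := congrArg (fun x : Γ => (x : Fin (2*ℓ) → F) (idx2 p)) hδ
      simp only [AddSubgroup.coe_add, Pi.add_apply, sigmaTot_idx2] at this
      have hs : sigmaVec F p (idx2 p) = 1 := by rw [sigmaVec_idx2]; simp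
      rw [hs] at this
      linear_combination this
    have hγ1 : (γ : Fin (2*ℓ) → F) (idx1 p)
        = -(α : Fin (2*ℓ) → F) (idx1 p) - (β : Fin (2*ℓ) → F) (idx1 p) := by
      linear_combination h1
    have hγ2 : (γ : Fin (2*ℓ) → F) (idx2 p)
        = -(α : Fin (2*ℓ) → F) (idx2 p) - (β : Fin (2*ℓ) → F) (idx2 p) := by
      linear_combination h2
    have hw : μ γ = - μ α - μ β := by
      have := congrArg μ hδ
      rw [map_add, map_add, map_add, hμ p, mu_sigmaTot Γ hσ μ hμ] at this
      linear_combination this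
    simp only [map_add, hμ p, zero_add]
    rw [hγ1, hγ2, hw]
    ring
  · rw [if_neg hδ]; ring
lemma cyc_single_single (hμ : ∀ p : Fin ℓ, μ ⟨sigmaVec F p, hσ p⟩ = 0)
    (α β : Γ) (a b : F) (h : Γ →₀ F) :
    phiMu Γ hσ μ (hamBr Γ hσ (Finsupp.single α a) (Finsupp.single β b)) h
    + phiMu Γ hσ μ (hamBr Γ hσ (Finsupp.single β b) h) (Finsupp.single α a)
    + phiMu Γ hσ μ (hamBr Γ hσ h (Finsupp.single α a)) (Finsupp.single β b) = 0 := by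
  induction h using Finsupp.induction with
  | zero => simp [hamBr_zero_left, hamBr_zero_right, phiMu_zero_left, phiMu_zero_right]
  | single_add γ c h hγ hc ih =>
    rw [phiMu_add_right, hamBr_add_right, hamBr_add_left, phiMu_add_left, phiMu_add_left]
    linear_combination key_cocycle Γ hσ μ hμ α β γ a b c + ih

lemma cyc_single (hμ : ∀ p : Fin ℓ, μ ⟨sigmaVec F p, hσ p⟩ = 0)
    (α : Γ) (a : F) (g h : Γ →₀ F) :
    phiMu Γ hσ μ (hamBr Γ hσ (Finsupp.single α a) g) h
    + phiMu Γ hσ μ (hamBr Γ hσ g h) (Finsupp.single α a)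
    + phiMu Γ hσ μ (hamBr Γ hσ h (Finsupp.single α a)) g = 0 := by
  induction g using Finsupp.induction with
  | zero => simp [hamBr_zero_left, hamBr_zero_right, phiMu_zero_left, phiMu_zero_right]
  | single_add β b g hβ hb ih =>
    rw [hamBr_add_right, phiMu_add_left, hamBr_add_left, phiMu_add_left, phiMu_add_right]
    linear_combination cyc_single_single Γ hσ μ hμ α β a b h + ih

lemma cyc_all (hμ : ∀ p : Fin ℓ, μ ⟨sigmaVec F p, hσ p⟩ = 0) (f g h : Γ →₀ F) :
    phiMu Γ hσ μ (hamBr Γ hσ f g) h + phiMu Γ hσ μ (hamBr Γ hσ g h) f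
    + phiMu Γ hσ μ (hamBr Γ hσ h f) g = 0 := by
  induction f using Finsupp.induction with
  | zero => simp [hamBr_zero_left, hamBr_zero_right, phiMu_zero_left, phiMu_zero_right]
  | single_add α a f hα ha ih =>
    rw [hamBr_add_left, phiMu_add_left, phiMu_add_right, hamBr_add_right, phiMu_add_left]
    linear_combination cyc_single Γ hσ μ hμ α a g h + ih

end Aux


/-- For a group homomorphism `μ : Γ → F` with `μ(σ_p) = 0` for all `p`, the
bilinear form `φ_μ` is a 2-cocycle on the Hamiltonian Lie algebra `F[Γ]`:
it is skew-symmetric and satisfies the cocycle identity. -/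
theorem phiMu_is_cocycle (ℓ : ℕ) (F : Type*) [Field F] [CharZero F]
    (Γ : AddSubgroup (Fin (2 * ℓ) → F)) (hσ : ∀ p : Fin ℓ, sigmaVec F p ∈ Γ)
    (μ : Γ →+ F) (hμ : ∀ p : Fin ℓ, μ ⟨sigmaVec F p, hσ p⟩ = 0) :
    (∀ f g : Γ →₀ F, phiMu Γ hσ μ f g = - phiMu Γ hσ μ g f) ∧
    (∀ f g h : Γ →₀ F,
      phiMu Γ hσ μ (hamBr Γ hσ f g) h + phiMu Γ hσ μ (hamBr Γ hσ g h) f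
        + phiMu Γ hσ μ (hamBr Γ hσ h f) g = 0) := by
  exact ⟨phiMu_skew Γ hσ μ hμ, cyc_all Γ hσ μ hμ⟩
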